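/- Assume T_{2n} > T* for all n ∈ ℕ and set c_n := M² e^{−2μ T_{2n}}. If the partial sums ∑_{n=0}^{N} ln( e^{2 D_{2n+1} T_{2n+1}} c_n ) tend to −∞ as N → ∞, then every trajectory U of the on–off anti-damped system satisfies ‖U(t)‖ → 0 as t → +∞. -/

import Mathlib

/-!
On an off-interval the semigroup bound gives `‖U(t₂ₙ₊₁)‖² ≤ cₙ ‖U(t₂ₙ)‖²`, and contractivity keeps
`‖U‖ ≤ ‖U(t₂ₙ)‖` there. On an on-interval dissipativity gives `(‖U‖²)' ≤ 2D₂ₙ₊₁ ‖U‖²`, so by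
Gronwall `‖U‖²` grows by a factor at most `e^{2D₂ₙ₊₁T₂ₙ₊₁}`. Hence on the `n`-th period `‖U‖²` is bounded by
`‖U₀‖²` times partial products of the factors `e^{2D₂ₙ₊₁T₂ₙ₊₁} cₙ`, which are the exponentials of
the partial sums of the hypothesis and therefore tend to `0`.
-/

open Real Set Filter Topology Finset
open scoped RealInnerProductSpace

theorem le_exp_mul_of_hasDerivAt_le_mul {φ φ' : ℝ → ℝ} {K a b : ℝ}
    (hφ : ContinuousOn φ (Icc a b)) (hderiv : ∀ s ∈ Ioo a b, HasDerivAt φ (φ' s) s)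
    (hbound : ∀ s ∈ Ioo a b, φ' s ≤ K * φ s) :
    ∀ s ∈ Icc a b, φ s ≤ exp (K * (s - a)) * φ a := by
  intro s hs
  have hanti : AntitoneOn (fun x => exp (-(K * x)) * φ x) (Icc a b) := by
    refine antitoneOn_of_hasDerivWithinAt_nonpos (convex_Icc a b)
      (f' := fun x => exp (-(K * x)) * (φ' x - K * φ x)) (by fun_prop) (fun x hx => ?_)
      (fun x hx => ?_)
    · rw [interior_Icc] at hx
      have hexp : HasDerivAt (fun x => exp (-(K * x))) (exp (-(K * x)) * -K) x :=
        ((hasDerivAt_id x).const_mul K).fun_neg.exp.congr_deriv (by simp)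
      exact ((hexp.mul (hderiv x hx)).congr_deriv (by ring)).hasDerivWithinAt
    · rw [interior_Icc] at hx
      exact mul_nonpos_of_nonneg_of_nonpos (exp_pos _).le (sub_nonpos.2 (hbound x hx))
  have hsa := hanti ⟨le_rfl, hs.1.trans hs.2⟩ hs hs.1
  calc φ s = exp (K * s) * (exp (-(K * s)) * φ s) := by
        rw [← mul_assoc, ← exp_add, add_neg_cancel, exp_zero, one_mul]
    _ ≤ exp (K * s) * (exp (-(K * a)) * φ a) := by gcongr
    _ = exp (K * (s - a)) * φ a := by rw [← mul_assoc, ← exp_add]; ring_nf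

theorem real_inner_add_apply_le_of_inner_nonpos {H : Type*} [NormedAddCommGroup H]
    [InnerProductSpace ℝ H] (A : H →L[ℝ] H) {u v : H} (huv : ⟪u, v⟫ ≤ 0) :
    ⟪u, v + A u⟫ ≤ ‖A‖ * ‖u‖ ^ 2 :=
  calc ⟪u, v + A u⟫ = ⟪u, v⟫ + ⟪u, A u⟫ := inner_add_right _ _ _
    _ ≤ 0 + ‖u‖ * (‖A‖ * ‖u‖) :=
        add_le_add huv ((real_inner_le_norm _ _).trans (by gcongr; exact A.le_opNorm u))
    _ = ‖A‖ * ‖u‖ ^ 2 := by ring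

theorem norm_sq_le_exp_of_hasDerivAt_dissipative_add {H : Type*} [NormedAddCommGroup H]
    [InnerProductSpace ℝ H] {U V : ℝ → H} {A : H →L[ℝ] H} {a b : ℝ}
    (hU : ContinuousOn U (Icc a b)) (hderiv : ∀ s ∈ Ioo a b, HasDerivAt U (V s + A (U s)) s)
    (hdiss : ∀ s ∈ Ioo a b, ⟪U s, V s⟫ ≤ 0) :
    ∀ s ∈ Icc a b, ‖U s‖ ^ 2 ≤ exp (2 * ‖A‖ * (b - a)) * ‖U a‖ ^ 2 := by
  intro s hs
  have hgronwall := le_exp_mul_of_hasDerivAt_le_mul (K := 2 * ‖A‖) (by fun_prop)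
    (fun s hs => (hderiv s hs).norm_sq) (fun s hs => by
      have := real_inner_add_apply_le_of_inner_nonpos A (hdiss s hs)
      linarith) s hs
  refine hgronwall.trans (mul_le_mul_of_nonneg_right (exp_le_exp.2 ?_) (sq_nonneg _))
  exact mul_le_mul_of_nonneg_left (by linarith [hs.2]) (by positivity)

theorem sq_norm_apply_le_of_opNorm_le_mul_exp {H : Type*} [NormedAddCommGroup H]
    [NormedSpace ℝ H] {T : H →L[ℝ] H} {M μ s : ℝ} (hT : ‖T‖ ≤ M * exp (-μ * s)) (x : H) :
    ‖T x‖ ^ 2 ≤ M ^ 2 * exp (-2 * μ * s) * ‖x‖ ^ 2 :=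
  calc ‖T x‖ ^ 2 ≤ (M * exp (-μ * s) * ‖x‖) ^ 2 := by gcongr; exact T.le_of_opNorm_le hT x
    _ = M ^ 2 * exp (-2 * μ * s) * ‖x‖ ^ 2 := by rw [mul_pow, mul_pow, ← exp_nat_mul]; ring_nf

theorem tendsto_prod_range_of_tendsto_sum_log {F : ℕ → ℝ} (hF : ∀ n, 0 ≤ F n)
    (h : Tendsto (fun N => ∑ n ∈ range N, log (F n)) atTop atBot) :
    Tendsto (fun N => ∏ n ∈ range N, F n) atTop (𝓝 0) := by
  refine squeeze_zero (fun N => prod_nonneg fun n _ => hF n) (fun N => ?_)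
    (tendsto_exp_atBot.comp h)
  calc ∏ n ∈ range N, F n ≤ ∏ n ∈ range N, exp (log (F n)) :=
        -- `le_exp_log` also holds at `0`, where `log 0 = 0`
        prod_le_prod (fun n _ => hF n) fun n _ => le_exp_log _
    _ = exp (∑ n ∈ range N, log (F n)) := (exp_sum _ _).symm

theorem le_prod_range_mul_of_le_mul {a F : ℕ → ℝ} (hF : ∀ n, 0 ≤ F n)
    (h : ∀ n, a (n + 1) ≤ F n * a n) : ∀ n, a n ≤ (∏ k ∈ range n, F k) * a 0
  | 0 => by simp
  | n + 1 =>
    calc a (n + 1) ≤ F n * a n := h n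
      _ ≤ F n * ((∏ k ∈ range n, F k) * a 0) :=
          mul_le_mul_of_nonneg_left (le_prod_range_mul_of_le_mul hF h n) (hF n)
      _ = (∏ k ∈ range (n + 1), F k) * a 0 := by rw [prod_range_succ]; ring

theorem exists_mem_Ico_of_tendsto_atTop {τ : ℕ → ℝ} (hτ : Tendsto τ atTop atTop) {r : ℝ}
    (hr : τ 0 ≤ r) : ∃ n, r ∈ Ico (τ n) (τ (n + 1)) := by
  classical
  have hex : ∃ m, r < τ m := (hτ.eventually_gt_atTop r).exists
  obtain ⟨n, hn⟩ : ∃ n, Nat.find hex = n + 1 :=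
    Nat.exists_eq_succ_of_ne_zero fun h0 => (Nat.find_spec hex).not_ge (h0 ▸ hr)
  exact ⟨n, not_lt.1 (Nat.find_min hex (by omega)), hn ▸ Nat.find_spec hex⟩

theorem tendsto_zero_of_le_on_Ico {f : ℝ → ℝ} {τ b : ℕ → ℝ} (hτ : Monotone τ)
    (hτ_top : Tendsto τ atTop atTop) (hb : Tendsto b atTop (𝓝 0)) (hf_nonneg : ∀ s, 0 ≤ f s)
    (hf : ∀ n, ∀ s ∈ Ico (τ n) (τ (n + 1)), f s ≤ b n) :
    Tendsto f atTop (𝓝 0) := by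
  refine tendsto_order.2 ⟨fun c hc => Eventually.of_forall fun s => hc.trans_le (hf_nonneg s),
    fun c hc => ?_⟩
  obtain ⟨N, hN⟩ := eventually_atTop.1 (hb.eventually (gt_mem_nhds hc))
  filter_upwards [eventually_ge_atTop (τ N)] with r hr
  obtain ⟨n, hn⟩ := exists_mem_Ico_of_tendsto_atTop hτ_top ((hτ (Nat.zero_le N)).trans hr)
  have hNn : N ≤ n := by
    by_contra! hlt
    exact (hn.2.trans_le (hτ hlt)).not_ge hr
  exact (hf n r hn).trans_lt (hN n hNn)

theorem tendsto_zero_of_two_phase_bound {f : ℝ → ℝ} {τ σ F : ℕ → ℝ} (hτ : Monotone τ)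
    (hτ_top : Tendsto τ atTop atTop) (hσ : ∀ n, σ n ≤ τ (n + 1)) (hF : ∀ n, 0 ≤ F n)
    (hprod : Tendsto (fun N => ∏ n ∈ range N, F n) atTop (𝓝 0)) (hf_nonneg : ∀ s, 0 ≤ f s)
    (hf₁ : ∀ n, ∀ s ∈ Icc (τ n) (σ n), f s ≤ f (τ n))
    (hf₂ : ∀ n, ∀ s ∈ Icc (σ n) (τ (n + 1)), f s ≤ F n * f (τ n)) :
    Tendsto f atTop (𝓝 0) := by
  have hgeom := le_prod_range_mul_of_le_mul (a := fun n => f (τ n)) hF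
    fun n => hf₂ n _ ⟨hσ n, le_rfl⟩
  have hP0 : ∀ {n}, 0 ≤ ∏ k ∈ range n, F k := prod_nonneg fun k _ => hF k
  have hb : Tendsto (fun n => (∏ k ∈ range n, F k + ∏ k ∈ range (n + 1), F k) * f (τ 0))
      atTop (𝓝 0) := by
    simpa using (hprod.add (hprod.comp (tendsto_add_atTop_nat 1))).mul_const (f (τ 0))
  refine tendsto_zero_of_le_on_Ico hτ hτ_top hb hf_nonneg fun n s hs => ?_
  rcases le_or_gt s (σ n) with hs' | hs'
  · calc f s ≤ f (τ n) := hf₁ n s ⟨hs.1, hs'⟩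
      _ ≤ (∏ k ∈ range n, F k) * f (τ 0) := hgeom n
      _ ≤ _ := mul_le_mul_of_nonneg_right (le_add_of_nonneg_right hP0) (hf_nonneg _)
  · calc f s ≤ F n * f (τ n) := hf₂ n s ⟨hs'.le, hs.2.le⟩
      _ ≤ F n * ((∏ k ∈ range n, F k) * f (τ 0)) := mul_le_mul_of_nonneg_left (hgeom n) (hF n)
      _ = (∏ k ∈ range (n + 1), F k) * f (τ 0) := by rw [prod_range_succ]; ring
      _ ≤ _ := mul_le_mul_of_nonneg_right (le_add_of_nonneg_left hP0) (hf_nonneg _)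

theorem stmt_10_general
    {H : Type*} [NormedAddCommGroup H] [InnerProductSpace ℝ H]
    (S : ℝ → H →L[ℝ] H) (M μ : ℝ)
    (hSbound : ∀ s : ℝ, 0 ≤ s → ‖S s‖ ≤ M * Real.exp (-μ * s))
    (hScontr : ∀ s : ℝ, 0 ≤ s → ∀ x : H, ‖S s x‖ ≤ ‖x‖)
    (t : ℕ → ℝ) (ht0 : t 0 = 0) (htmono : StrictMono t)
    (htlim : Filter.Tendsto t Filter.atTop Filter.atTop)
    (D : ℕ → H →L[ℝ] H)
    (hdiv : Filter.Tendsto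
      (fun N => ∑ n ∈ Finset.range (N+1),
        Real.log (Real.exp (2*‖D n‖*(t (2*n+2) - t (2*n+1))) *
          (M^2 * Real.exp (-2*μ*(t (2*n+1) - t (2*n))))))
      Filter.atTop Filter.atBot)
    (U : ℝ → H) (V : ℝ → H)
    (hUcont : ContinuousOn U (Set.Ici (0:ℝ)))
    (hUeven : ∀ n : ℕ, ∀ s ∈ Set.Icc (t (2*n)) (t (2*n+1)),
      U s = S (s - t (2*n)) (U (t (2*n))))
    (hUodd : ∀ n : ℕ, ∀ s ∈ Set.Ioo (t (2*n+1)) (t (2*n+2)),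
      HasDerivAt U (V s + D n (U s)) s)
    (hdiss : ∀ n : ℕ, ∀ s ∈ Set.Ioo (t (2*n+1)) (t (2*n+2)),
      (inner ℝ (U s) (V s) : ℝ) ≤ 0)
    :
    Filter.Tendsto (fun r => ‖U r‖) Filter.atTop (nhds 0) := by
  have ht : Monotone t := htmono.monotone
  have ht_nonneg : ∀ n, 0 ≤ t n := fun n => ht0 ▸ ht (Nat.zero_le n)
  have hsq : Tendsto (fun r => ‖U r‖ ^ 2) atTop (𝓝 0) := by
    refine tendsto_zero_of_two_phase_bound (τ := fun n => t (2 * n)) (σ := fun n => t (2 * n + 1))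
      (fun m n h => ht (by omega)) (htlim.comp (tendsto_id.const_mul_atTop' two_pos))
      (fun n => ht (by omega)) (fun n => by positivity)
      (tendsto_prod_range_of_tendsto_sum_log (fun n => by positivity)
        ((tendsto_add_atTop_iff_nat 1).1 hdiv)) (fun s => sq_nonneg _) (fun n s hs => ?_)
      (fun n s hs => ?_)
    · rw [hUeven n s hs]
      gcongr
      exact hScontr _ (sub_nonneg.2 hs.1) _
    · have hdecay := hUeven n _ ⟨ht (by omega), le_rfl⟩ ▸
        sq_norm_apply_le_of_opNorm_le_mul_exp (hSbound _ (sub_nonneg.2 (ht (by omega)))) _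
      have hgrowth := norm_sq_le_exp_of_hasDerivAt_dissipative_add
        (hUcont.mono fun x hx => (ht_nonneg _).trans hx.1)
        (hUodd n) (hdiss n) s hs
      rw [mul_assoc]
      exact hgrowth.trans (mul_le_mul_of_nonneg_left hdecay (exp_pos _).le)
  simpa using hsq.sqrt

theorem stmt_10
    {H : Type*} [NormedAddCommGroup H] [InnerProductSpace ℝ H]
    (S : ℝ → H →L[ℝ] H) (M μ : ℝ)
    (hM : 1 ≤ M) (hμ : 0 < μ)
    (hS0 : S 0 = ContinuousLinearMap.id ℝ H)
    (hSadd : ∀ s u : ℝ, 0 ≤ s → 0 ≤ u → S (s + u) = (S s).comp (S u))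
    (hScont : ∀ x : H, ContinuousOn (fun s => S s x) (Set.Ici (0:ℝ)))
    (hSbound : ∀ s : ℝ, 0 ≤ s → ‖S s‖ ≤ M * Real.exp (-μ * s))
    (hScontr : ∀ s : ℝ, 0 ≤ s → ∀ x : H, ‖S s x‖ ≤ ‖x‖)
    (t : ℕ → ℝ) (ht0 : t 0 = 0) (htmono : StrictMono t)
    (htlim : Filter.Tendsto t Filter.atTop Filter.atTop)
    (D : ℕ → H →L[ℝ] H)
    (hDpos : ∀ (n : ℕ) (x : H), (0:ℝ) ≤ inner ℝ (D n x) x)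
    (hT2nstar : ∀ n : ℕ, Real.log M / μ < t (2*n+1) - t (2*n))
    (hdiv : Filter.Tendsto
      (fun N => ∑ n ∈ Finset.range (N+1),
        Real.log (Real.exp (2*‖D n‖*(t (2*n+2) - t (2*n+1))) *
          (M^2 * Real.exp (-2*μ*(t (2*n+1) - t (2*n))))))
      Filter.atTop Filter.atBot)
    (U : ℝ → H) (U₀ : H) (V : ℝ → H)
    (hUcont : ContinuousOn U (Set.Ici (0:ℝ))) (hU0 : U 0 = U₀)
    (hUeven : ∀ n : ℕ, ∀ s ∈ Set.Icc (t (2*n)) (t (2*n+1)),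
      U s = S (s - t (2*n)) (U (t (2*n))))
    (hUodd : ∀ n : ℕ, ∀ s ∈ Set.Ioo (t (2*n+1)) (t (2*n+2)),
      HasDerivAt U (V s + D n (U s)) s)
    (hdiss : ∀ n : ℕ, ∀ s ∈ Set.Ioo (t (2*n+1)) (t (2*n+2)),
      (inner ℝ (U s) (V s) : ℝ) ≤ 0)
    :
    Filter.Tendsto (fun r => ‖U r‖) Filter.atTop (nhds 0) :=
  stmt_10_general S M μ hSbound hScontr t ht0 htmono htlim D hdiv U V hUcont hUeven hUodd hdiss
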